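/- For every integer n ≥ 3, the achievement number of the star K_{1,n} satisfies a(K_{1,n}) ≥ n + 2; that is, Alice has no winning strategy in the game (K_{1,n}, K_{n+1}, +). -/

import Mathlib

namespace AchievementGame

/-- A strategy for the achievement game: given the history of all moves played so far
(earliest first), produce the next move (an edge, i.e. an element of `Sym2`). -/
def Strategy (α : Type*) : Type _ := List (Sym2 α) → Sym2 α

/-- A strategy is valid for the host graph `G` if, whenever some edge of `G` is still
uncolored, it chooses an uncolored edge of `G`. -/
def Strategy.Valid {α : Type*} (G : SimpleGraph α) (s : Strategy α) : Prop :=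
  ∀ l : List (Sym2 α), (∃ e ∈ G.edgeSet, e ∉ l) → s l ∈ G.edgeSet ∧ s l ∉ l

/-- The history of the first `n` moves when Alice plays strategy `σ` and Bob plays
strategy `τ`; Alice moves first and the players alternate. -/
def hist {α : Type*} (σ τ : Strategy α) : ℕ → List (Sym2 α)
  | 0 => []
  | n + 1 => hist σ τ n ++ [(if n % 2 = 0 then σ else τ) (hist σ τ n)]

/-- The `n`-th move (0-indexed): even indices are Alice's (blue) moves,
odd indices are Bob's (red) moves. -/
def move {α : Type*} (σ τ : Strategy α) (n : ℕ) : Sym2 α :=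
  (if n % 2 = 0 then σ else τ) (hist σ τ n)

/-- The set `s` of edges contains a copy of the graph `F`. -/
def HasCopy {α β : Type*} (F : SimpleGraph β) (s : Set (Sym2 α)) : Prop :=
  ∃ f : β ↪ α, ∀ a b, F.Adj a b → s(f a, f b) ∈ s

/-- Alice has a winning strategy in the achievement game `(F, G, +)`: Alice has a valid
strategy such that against every valid strategy of Bob, at some legal move of Alice
(her `(k+1)`-st move, which exists since `2k+1 ≤ |E(G)|`) the blue edges contain a copy
of `F`, while the red edges played strictly before do not. -/
def AliceWins {α β : Type*} (F : SimpleGraph β) (G : SimpleGraph α) : Prop :=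
  ∃ σ : Strategy α, Strategy.Valid G σ ∧ ∀ τ : Strategy α, Strategy.Valid G τ →
    ∃ k : ℕ, 2 * k + 1 ≤ G.edgeSet.ncard ∧
      HasCopy F {e | ∃ i ≤ k, e = move σ τ (2 * i)} ∧
      ¬ HasCopy F {e | ∃ i < k, e = move σ τ (2 * i + 1)}

/-- The matching `mK₂` consisting of `m` pairwise disjoint edges. -/
def matching (m : ℕ) : SimpleGraph (Fin m ⊕ Fin m) :=
  SimpleGraph.fromRel (fun a b => ∃ i, a = Sum.inl i ∧ b = Sum.inr i)

/-- The star `K_{1,m}`: the center `0` joined to `m` leaves. -/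
def star (m : ℕ) : SimpleGraph (Fin (m + 1)) :=
  SimpleGraph.fromRel (fun a _ => a = 0)

/-- The double star `S_{m,n}`: disjoint stars `K_{1,m}` and `K_{1,n}` with an edge
joining their centers `Sum.inl 0` and `Sum.inr 0`. -/
def doubleStar (m n : ℕ) : SimpleGraph (Fin (m + 1) ⊕ Fin (n + 1)) :=
  SimpleGraph.fromRel (fun a b =>
    (a = Sum.inl 0 ∧ ∃ i, b = Sum.inl i) ∨
    (a = Sum.inr 0 ∧ ∃ j, b = Sum.inr j) ∨
    (a = Sum.inl 0 ∧ b = Sum.inr 0))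

/-- The disjoint union `K_{1,m} ∪ nK₂` of a star and a matching. -/
def starMatching (m n : ℕ) : SimpleGraph (Fin (m + 1) ⊕ (Fin n ⊕ Fin n)) :=
  SimpleGraph.fromRel (fun a b =>
    (a = Sum.inl 0 ∧ ∃ i, b = Sum.inl i) ∨
    (∃ i, a = Sum.inr (Sum.inl i) ∧ b = Sum.inr (Sum.inr i)))

end AchievementGame

open AchievementGame

/-!
Bob only has to stop Alice from claiming all `n` edges at one vertex of `K_{n+1}`.

For `n ≥ 4`, read the vertices as `ℤ/(n+1)` and pair `{i, i+1}` with `{i, i+2}`; since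
`2, 3, 4 ≠ 0` these pairs are pairwise disjoint. Bob answers each of Alice's edges with its
partner, so Alice never gets both `{c, c+1}` and `{c, c+2}`.

For `n = 3` the six edges of `K₄` admit no such pairing. Instead Bob claims a threat: an edge
at a vertex all of whose other edges are blue. Alice's three moves would all have to be edges at
one vertex `c`. After her first two, the third edge at `c` is a threat. Because `K₄` is
3-regular, every threat is an edge at `c`, so Bob takes exactly that edge.
-/

open Fin.CommRing in
theorem Fin.natCast_ne_zero_of_pos_of_le {n k : ℕ} (hk : 0 < k) (hkn : k ≤ n) :
    (k : Fin (n + 1)) ≠ 0 := fun h =>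
  absurd (Nat.le_of_dvd hk (Fin.natCast_eq_zero.1 h)) (by omega)

namespace AchievementGame

variable {α : Type*}

section Play

variable (σ τ : Strategy α)

theorem hist_succ (m : ℕ) : hist σ τ (m + 1) = hist σ τ m ++ [move σ τ m] := rfl

theorem hist_eq_map_range (m : ℕ) : hist σ τ m = (List.range m).map (move σ τ) := by
  induction m with
  | zero => rfl
  | succ m ih => rw [hist_succ, ih, List.range_succ, List.map_append, List.map_singleton]

theorem length_hist (m : ℕ) : (hist σ τ m).length = m := by
  simp [hist_eq_map_range]

theorem mem_hist {m : ℕ} {e : Sym2 α} : e ∈ hist σ τ m ↔ ∃ i < m, move σ τ i = e := by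
  simp [hist_eq_map_range]

theorem getLast?_hist_succ (m : ℕ) : (hist σ τ (m + 1)).getLast? = some (move σ τ m) := by
  rw [hist_succ, List.getLast?_concat]

theorem move_of_odd {m : ℕ} (hm : m % 2 = 1) : move σ τ m = τ (hist σ τ m) := by
  simp [move, hm]

end Play

theorem exists_not_mem_of_length_lt {G : SimpleGraph α} {l : List (Sym2 α)}
    (h : l.length < G.edgeSet.ncard) : ∃ e ∈ G.edgeSet, e ∉ l := by
  classical
  by_contra! hl
  have : G.edgeSet.ncard ≤ l.length :=
    calc G.edgeSet.ncard ≤ (l.toFinset : Set (Sym2 α)).ncard :=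
          Set.ncard_le_ncard (fun e he => by simpa using hl e he) (Finset.finite_toSet _)
      _ = l.toFinset.card := Set.ncard_coe_finset _
      _ ≤ l.length := l.toFinset_card_le
  omega

section Legal

variable {G : SimpleGraph α} {σ τ : Strategy α}

theorem move_mem_edgeSet_and_not_mem_hist (hσ : σ.Valid G) (hτ : τ.Valid G) {m : ℕ}
    (hm : m < G.edgeSet.ncard) : move σ τ m ∈ G.edgeSet ∧ move σ τ m ∉ hist σ τ m := by
  have hfree := exists_not_mem_of_length_lt (G := G) (by rwa [length_hist σ τ])
  unfold move
  split_ifs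
  exacts [hσ _ hfree, hτ _ hfree]

theorem move_ne_move (hσ : σ.Valid G) (hτ : τ.Valid G) {i j : ℕ} (hij : i < j)
    (hj : j < G.edgeSet.ncard) : move σ τ i ≠ move σ τ j := fun h =>
  (move_mem_edgeSet_and_not_mem_hist hσ hτ hj).2 ((mem_hist σ τ).2 ⟨i, hij, h⟩)

theorem move_not_mem_hist_of_le (hσ : σ.Valid G) (hτ : τ.Valid G) {m' m : ℕ} (hm' : m' ≤ m)
    (hm : m < G.edgeSet.ncard) : move σ τ m ∉ hist σ τ m' := fun h => by
  obtain ⟨i, hi, hieq⟩ := (mem_hist σ τ).1 h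
  exact move_ne_move hσ hτ (by omega) hm hieq

end Legal

namespace Strategy

noncomputable def preferring [Inhabited α] (G : SimpleGraph α)
    (W : List (Sym2 α) → Set (Sym2 α)) : Strategy α := fun l =>
  Classical.epsilon fun e =>
    e ∈ G.edgeSet ∧ e ∉ l ∧ ((∃ f ∈ W l, f ∈ G.edgeSet ∧ f ∉ l) → e ∈ W l)

variable [Inhabited α] {G : SimpleGraph α} {W : List (Sym2 α) → Set (Sym2 α)}

theorem preferring_spec {l : List (Sym2 α)} (h : ∃ e ∈ G.edgeSet, e ∉ l) :
    preferring G W l ∈ G.edgeSet ∧ preferring G W l ∉ l ∧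
      ((∃ f ∈ W l, f ∈ G.edgeSet ∧ f ∉ l) → preferring G W l ∈ W l) := by
  refine Classical.epsilon_spec (p := fun e => e ∈ G.edgeSet ∧ e ∉ l ∧ _) ?_
  by_cases hW : ∃ f ∈ W l, f ∈ G.edgeSet ∧ f ∉ l
  · obtain ⟨f, hfW, hfG, hfl⟩ := hW
    exact ⟨f, hfG, hfl, fun _ => hfW⟩
  · obtain ⟨e, heG, hel⟩ := h
    exact ⟨e, heG, hel, fun h => absurd h hW⟩

theorem valid_preferring (G : SimpleGraph α) (W : List (Sym2 α) → Set (Sym2 α)) :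
    (preferring G W).Valid G := fun _ h => ⟨(preferring_spec h).1, (preferring_spec h).2.1⟩

theorem preferring_mem {l : List (Sym2 α)} (h : ∃ f ∈ W l, f ∈ G.edgeSet ∧ f ∉ l) :
    preferring G W l ∈ W l := by
  obtain ⟨f, -, hfG, hfl⟩ := id h
  exact (preferring_spec ⟨f, hfG, hfl⟩).2.2 h

end Strategy

section Pairing

def pairReplies (P : Sym2 α → Sym2 α → Prop) (l : List (Sym2 α)) : Set (Sym2 α) :=
  {f | ∃ e, l.getLast? = some e ∧ P e f}

theorem not_pair_moves_of_pairing [Inhabited α] {G : SimpleGraph α} {σ : Strategy α}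
    (hσ : σ.Valid G) {P : Sym2 α → Sym2 α → Prop} (hP : ∀ ⦃e f f'⦄, P e f → P e f' → f = f')
    ⦃i j : ℕ⦄ (hij : i < j) (hj : 2 * j < G.edgeSet.ncard) :
    ¬ P (move σ (.preferring G (pairReplies P)) (2 * i))
      (move σ (.preferring G (pairReplies P)) (2 * j)) := by
  set τ := Strategy.preferring G (pairReplies P)
  have hτ : τ.Valid G := Strategy.valid_preferring G _
  intro hpair
  have hlast := getLast?_hist_succ σ τ (2 * i)
  obtain ⟨e, he, hreply⟩ : τ (hist σ τ (2 * i + 1)) ∈ pairReplies P (hist σ τ (2 * i + 1)) :=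
    Strategy.preferring_mem ⟨_, ⟨_, hlast, hpair⟩,
      (move_mem_edgeSet_and_not_mem_hist hσ hτ hj).1,
      move_not_mem_hist_of_le hσ hτ (by omega) hj⟩
  obtain rfl : e = move σ τ (2 * i) := Option.some.inj (he.symm.trans hlast)
  have hbob : move σ τ (2 * i + 1) = move σ τ (2 * j) := by
    rw [move_of_odd σ τ (by omega)]
    exact hP hreply hpair
  exact move_ne_move hσ hτ (by omega) hj hbob

variable {R : Type*} [CommRing R]

theorem mk_add_eq_mk_add {i j a b : R} (h : s(i, i + a) = s(j, j + b)) :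
    i = j ∧ a = b ∨ a + b = 0 ∧ i = j + b := by
  rcases Sym2.eq_iff.1 h with ⟨h₁, h₂⟩ | ⟨h₁, h₂⟩
  · exact .inl ⟨h₁, by linear_combination h₂ - h₁⟩
  · exact .inr ⟨by linear_combination h₂ - h₁, h₁⟩

def shiftPair (e f : Sym2 R) : Prop :=
  ∃ i, e = s(i, i + 1) ∧ f = s(i, i + 2) ∨ e = s(i, i + 2) ∧ f = s(i, i + 1)

theorem shiftPair_right_unique (h2 : (2 : R) ≠ 0) (h3 : (3 : R) ≠ 0) (h4 : (4 : R) ≠ 0)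
    ⦃e f f' : Sym2 R⦄ (hf : shiftPair e f) (hf' : shiftPair e f') : f = f' := by
  obtain ⟨i, ⟨rfl, rfl⟩ | ⟨rfl, rfl⟩⟩ := hf <;> obtain ⟨j, ⟨he, rfl⟩ | ⟨he, rfl⟩⟩ := hf' <;>
    rcases mk_add_eq_mk_add he with ⟨rfl, hab⟩ | ⟨hab, -⟩
  all_goals first
    | rfl
    | exact (h2 (by linear_combination hab)).elim
    | exact (h2 (by linear_combination -2 * hab)).elim
    | exact (h2 (by linear_combination 2 * hab)).elim
    | exact (h3 (by linear_combination hab)).elim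
    | exact (h4 (by linear_combination hab)).elim

end Pairing

theorem exists_incidenceSet_subset_of_hasCopy_star {n : ℕ} {B : Set (Sym2 (Fin (n + 1)))}
    (h : HasCopy (star n) B) : ∃ c, (⊤ : SimpleGraph (Fin (n + 1))).incidenceSet c ⊆ B := by
  obtain ⟨f, hf⟩ := h
  refine ⟨f 0, fun e ⟨he, hce⟩ => ?_⟩
  obtain ⟨w, rfl⟩ := Sym2.mem_iff_exists.1 hce
  obtain ⟨b, rfl⟩ := (Finite.injective_iff_surjective.1 f.injective) w
  refine hf 0 b ?_
  have hb : (0 : Fin (n + 1)) ≠ b := fun h => by simp [h] at he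
  simp [star, hb]

open Fin.CommRing in
theorem not_aliceWins_star_of_four_le {n : ℕ} (hn : 4 ≤ n) :
    ¬ AliceWins (star n) (⊤ : SimpleGraph (Fin (n + 1))) := by
  rintro ⟨σ, hσ, hwin⟩
  obtain ⟨k, hk, hblue, -⟩ := hwin _ (Strategy.valid_preferring ⊤ (pairReplies shiftPair))
  obtain ⟨c, hc⟩ := exists_incidenceSet_subset_of_hasCopy_star hblue
  have hcast (m : ℕ) (hm : 0 < m) (hm4 : m ≤ 4) : (m : Fin (n + 1)) ≠ 0 :=
    Fin.natCast_ne_zero_of_pos_of_le hm (by omega)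
  obtain ⟨h1, h2, h3, h4⟩ : (1 : Fin (n + 1)) ≠ 0 ∧ (2 : Fin (n + 1)) ≠ 0 ∧
      (3 : Fin (n + 1)) ≠ 0 ∧ (4 : Fin (n + 1)) ≠ 0 :=
    ⟨mod_cast hcast 1 (by norm_num) (by norm_num), mod_cast hcast 2 (by norm_num) (by norm_num),
      mod_cast hcast 3 (by norm_num) (by norm_num), mod_cast hcast 4 (by norm_num) (by norm_num)⟩
  have hstar (a : Fin (n + 1)) (ha : a ≠ 0) : ∃ i ≤ k, s(c, c + a) = move σ _ (2 * i) :=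
    hc ⟨by simpa using ha, Sym2.mem_mk_left _ _⟩
  obtain ⟨i, hik, hi⟩ := hstar 1 h1
  obtain ⟨j, hjk, hj⟩ := hstar 2 h2
  have hpair := not_pair_moves_of_pairing hσ (shiftPair_right_unique h2 h3 h4)
  rcases lt_trichotomy i j with hij | rfl | hij
  · exact hpair hij (by omega) (hi ▸ hj ▸ ⟨c, .inl ⟨rfl, rfl⟩⟩)
  · rcases mk_add_eq_mk_add (hi.trans hj.symm) with ⟨-, h12⟩ | ⟨h12, -⟩
    · exact h2 (by linear_combination -2 * h12)
    · exact h3 (by linear_combination h12)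
  · exact hpair hij (by omega) (hi ▸ hj ▸ ⟨c, .inr ⟨rfl, rfl⟩⟩)

section Threats

def blueEdges (l : List (Sym2 α)) : Set (Sym2 α) := {e | ∃ i, l[2 * i]? = some e}

theorem blueEdges_hist_three (σ τ : Strategy α) :
    blueEdges (hist σ τ 3) = {move σ τ 0, move σ τ 2} := by
  ext e
  simp only [blueEdges, hist_eq_map_range, List.getElem?_map, Option.map_eq_some_iff,
    Set.mem_ofPred_eq, Set.mem_insert_iff, Set.mem_singleton_iff]
  constructor
  · rintro ⟨i, a, h, rfl⟩
    obtain ⟨hi, rfl⟩ := List.getElem?_eq_some_iff.1 h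
    rw [List.length_range] at hi
    obtain rfl | rfl : i = 0 ∨ i = 1 := by omega
    exacts [.inl rfl, .inr rfl]
  · rintro (rfl | rfl)
    exacts [⟨0, 0, rfl, rfl⟩, ⟨1, 2, rfl, rfl⟩]

def threats (G : SimpleGraph α) (B : Set (Sym2 α)) : Set (Sym2 α) :=
  {e | ∃ v ∈ e, ∀ f ∈ G.incidenceSet v, f ≠ e → f ∈ B}

variable [DecidableEq α] {G : SimpleGraph α} [G.LocallyFinite]

theorem incidenceFinset_eq_of_subset {v : α} {s : Finset (Sym2 α)} (h : G.incidenceSet v ⊆ s)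
    (hs : s.card ≤ G.degree v) : G.incidenceFinset v = s :=
  Finset.eq_of_subset_of_card_le (fun e he => h ((G.mem_incidenceFinset _ e).1 he))
    (by rwa [SimpleGraph.card_incidenceFinset_eq_degree])

theorem mem_incidenceFinset_of_mem_threats (hG : G.IsRegularOfDegree 3) {a b e : Sym2 α}
    {c : α} (hca : c ∈ a) (hcb : c ∈ b) (hab : a ≠ b) (he : e ∈ threats G {a, b}) :
    e ∈ G.incidenceFinset c := by
  obtain ⟨v, -, hv⟩ := he
  have hvE : G.incidenceFinset v = {a, b, e} := by
    refine incidenceFinset_eq_of_subset (fun f hf => ?_)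
      (Finset.card_le_three.trans (hG.degree_eq v).ge)
    by_cases hfe : f = e
    · simp [hfe]
    · rcases hv f hf hfe with rfl | rfl <;> simp
  have hvf (f) (hf : f ∈ ({a, b, e} : Finset (Sym2 α))) : v ∈ f :=
    ((G.mem_incidenceFinset _ f).1 (hvE ▸ hf)).2
  obtain rfl : v = c := by
    by_contra hvc
    exact hab (((Sym2.mem_and_mem_iff hvc).1 ⟨hvf a (by simp), hca⟩).trans
      ((Sym2.mem_and_mem_iff hvc).1 ⟨hvf b (by simp), hcb⟩).symm)
  simp [hvE]

end Threats

theorem card_edgeSet_top_fin_four : (⊤ : SimpleGraph (Fin 4)).edgeSet.ncard = 6 := by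
  rw [Set.ncard_eq_toFinset_card']
  decide

theorem not_aliceWins_star_three : ¬ AliceWins (star 3) (⊤ : SimpleGraph (Fin (3 + 1))) := by
  rintro ⟨σ, hσ, hwin⟩
  set τ := Strategy.preferring (⊤ : SimpleGraph (Fin 4)) (fun l => threats ⊤ (blueEdges l))
  have hτ : τ.Valid ⊤ := Strategy.valid_preferring _ _
  obtain ⟨k, hk, hblue, -⟩ := hwin τ hτ
  obtain ⟨c, hc⟩ := exists_incidenceSet_subset_of_hasCopy_star hblue
  have hcard := card_edgeSet_top_fin_four
  rw [hcard] at hk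
  have hne {i j : ℕ} (hij : i < j) (hj : j < 6) : move σ τ i ≠ move σ τ j :=
    move_ne_move hσ hτ hij (hcard ▸ hj)
  have hreg : (⊤ : SimpleGraph (Fin 4)).IsRegularOfDegree 3 := .top
  have hcE : (⊤ : SimpleGraph (Fin 4)).incidenceFinset c =
      {move σ τ 0, move σ τ 2, move σ τ 4} := by
    refine incidenceFinset_eq_of_subset (fun e he => ?_)
      (Finset.card_le_three.trans (hreg.degree_eq c).ge)
    obtain ⟨i, hi, rfl⟩ := hc he
    have : i ≤ 2 := by omega
    interval_cases i <;> simp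
  have hcf (f) (hf : f ∈ ({move σ τ 0, move σ τ 2, move σ τ 4} : Finset _)) : c ∈ f :=
    (((⊤ : SimpleGraph (Fin 4)).mem_incidenceFinset _ f).1 (hcE ▸ hf)).2
  have h4 : move σ τ 4 ∈ threats ⊤ (blueEdges (hist σ τ 3)) := by
    refine ⟨c, hcf _ (by simp), fun f hf hf4 => ?_⟩
    rw [← SimpleGraph.mem_incidenceFinset, hcE] at hf
    simpa [blueEdges_hist_three, hf4] using hf
  have h3 : move σ τ 3 ∈ threats ⊤ (blueEdges (hist σ τ 3)) := by
    rw [move_of_odd σ τ (m := 3) rfl]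
    exact Strategy.preferring_mem ⟨_, h4,
      (move_mem_edgeSet_and_not_mem_hist hσ hτ (by omega)).1,
      move_not_mem_hist_of_le hσ hτ (by omega) (by omega)⟩
  rw [blueEdges_hist_three] at h3
  have h3c := mem_incidenceFinset_of_mem_threats hreg (hcf _ (by simp)) (hcf _ (by simp))
    (hne (by omega) (by omega)) h3
  rw [hcE, Finset.mem_insert, Finset.mem_insert, Finset.mem_singleton] at h3c
  rcases h3c with h | h | h
  exacts [hne (by omega) (by omega) h.symm, hne (by omega) (by omega) h.symm,
    hne (by omega) (by omega) h]

end AchievementGame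

/-- For every integer `n ≥ 3`, `a(K_{1,n}) ≥ n + 2`; that is, Alice has no winning
strategy in the achievement game `(K_{1,n}, K_{n+1}, +)`. -/
theorem stmt1 (n : ℕ) (hn : 3 ≤ n) :
    ¬ AliceWins (star n) (⊤ : SimpleGraph (Fin (n + 1))) := by
  obtain rfl | hn4 := hn.eq_or_lt
  · exact not_aliceWins_star_three
  · exact not_aliceWins_star_of_four_le hn4
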